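/- Under the standard preorder bijection between Dyck paths of semilength n and ordered trees with n edges, the number of up steps at height h in a Dyck path equals the number of edges at level h in the corresponding tree, and the number of exterior pairs of the path equals the number of exterior edges of the tree. -/

import Mathlib

/-- A Dyck path of semilength `n`, encoded as a list of booleans where
`true` is an up step `(1,1)` and `false` is a down step `(1,-1)`;
the path never goes below the x-axis. -/
def IsDyckPath (n : ℕ) (p : List Bool) : Prop :=
  p.length = 2 * n ∧ p.count true = n ∧
  ∀ i, (p.take i).count false ≤ (p.take i).count true

/-- The height of the `i`-th step: the y-coordinate reached after step `i`.
For an up step this is the height `h` such that the step rises from `y = h-1` to `y = h`. -/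
def stepHeight (p : List Bool) (i : ℕ) : ℕ :=
  (p.take (i + 1)).count true - (p.take (i + 1)).count false

/-- The number of up steps of `p` at height `h` with `h ≡ c (mod m)`. -/
def upStepsMod (m c : ℕ) (p : List Bool) : ℕ :=
  ((Finset.range p.length).filter
    (fun i => p.getD i false = true ∧ stepHeight p i % m = c)).card


/-- The number of up steps of `p` at height exactly `h`. -/
def upStepsAtHeight (h : ℕ) (p : List Bool) : ℕ :=
  ((Finset.range p.length).filter
    (fun i => p.getD i false = true ∧ stepHeight p i = h)).card

/-- The up step at position `i` is matched with the down step at position `j`: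
the steps strictly between them form a balanced nonnegative (Dyck) word. -/
def Matched (p : List Bool) (i j : ℕ) : Prop :=
  i < j ∧ j < p.length ∧ p.getD i false = true ∧ p.getD j true = false ∧
  (((p.drop (i + 1)).take (j - i - 1)).count true =
      ((p.drop (i + 1)).take (j - i - 1)).count false) ∧
  ∀ k < j - i - 1,
    ((((p.drop (i + 1)).take (j - i - 1)).take k).count false ≤
      (((p.drop (i + 1)).take (j - i - 1)).take k).count true)

/-- The section of `p` from position `a` to position `b` (inclusive) is a pyramid
`U^h D^h`. -/
def IsPyramidSec (p : List Bool) (a b : ℕ) : Prop :=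
  a ≤ b ∧ b < p.length ∧ b - a + 1 = 2 * ((b - a + 1) / 2) ∧
  (p.drop a).take (b - a + 1) =
    List.replicate ((b - a + 1) / 2) true ++ List.replicate ((b - a + 1) / 2) false

/-- A matched pair `(i, j)` is exterior if it does not belong to any pyramid,
equivalently the section of the path from `i` to `j` is not of the form `U^t D^t`. -/
def ExteriorPair (p : List Bool) (i j : ℕ) : Prop :=
  Matched p i j ∧ ¬ IsPyramidSec p i j

open scoped Classical in
/-- The number of exterior pairs of `p`. -/
noncomputable def exteriorPairs (p : List Bool) : ℕ :=
  ((Finset.range p.length ×ˢ Finset.range p.length).filter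
    (fun q : ℕ × ℕ => ExteriorPair p q.1 q.2)).card


/-- An ordered (plane) tree: an unlabeled rooted tree where the order of the subtrees
of each vertex is significant. -/
inductive OTree where
  | node : List OTree → OTree

namespace OTree

/-- The number of edges of an ordered tree. -/
def numEdges : OTree → ℕ
  | .node ts => (ts.attach.map (fun c => numEdges c.1 + 1)).sum
  decreasing_by
    simp_wf
    have := List.sizeOf_lt_of_mem c.2
    simp at this ⊢
    omega


/-- The number of leaves of an ordered tree (a tree with no edges has one leaf,
its root). -/
def numLeaves : OTree → ℕ
  | .node [] => 1
  | .node (t :: ts) => ((t :: ts).attach.map (fun c => numLeaves c.1)).sum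
  decreasing_by
    simp_wf
    have := List.sizeOf_lt_of_mem c.2
    simp at this ⊢
    omega


/-- The number of exterior edges: edges `uv` such that the planted subtree consisting
of `uv` and all descendants of `v` has at least two leaves. -/
def extEdges : OTree → ℕ
  | .node ts => (ts.attach.map
      (fun c => (if 2 ≤ numLeaves c.1 then 1 else 0) + extEdges c.1)).sum
  decreasing_by
    simp_wf
    have := List.sizeOf_lt_of_mem c.2
    simp at this ⊢
    omega


/-- `edgesAtLevelFrom t cur h` is the number of edges of `t` at level `h`, where the
root of `t` is at distance `cur` from the global root (the level of an edge `uv` is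
the distance from the root to the child `v`). -/
def edgesAtLevelFrom (t : OTree) (cur h : ℕ) : ℕ :=
  match t with
  | .node ts => (ts.attach.map
      (fun c => (if cur + 1 = h then 1 else 0) + edgesAtLevelFrom c.1 (cur + 1) h)).sum
  termination_by t
  decreasing_by
    simp_wf
    have := List.sizeOf_lt_of_mem c.2
    simp at this ⊢
    omega


/-- The number of edges of `t` at level `h`. -/
def edgesAtLevel (t : OTree) (h : ℕ) : ℕ := edgesAtLevelFrom t 0 h

/-- `edgesLevelModFrom t cur m c`: the number of edges of `t` at level `h` with
`h ≡ c (mod m)`, the root being at distance `cur` from the global root. -/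
def edgesLevelModFrom (t : OTree) (cur m c : ℕ) : ℕ :=
  match t with
  | .node ts => (ts.attach.map
      (fun x => (if (cur + 1) % m = c then 1 else 0) +
        edgesLevelModFrom x.1 (cur + 1) m c)).sum
  termination_by t
  decreasing_by
    simp_wf
    have := List.sizeOf_lt_of_mem x.2
    simp at this ⊢
    omega


/-- The number of edges of `t` at level `h` with `h ≡ c (mod m)`. -/
def edgesLevelMod (t : OTree) (m c : ℕ) : ℕ := edgesLevelModFrom t 0 m c

/-- The preorder traversal word of an ordered tree: each edge contributes a `true`
(up step) when first passed going down and a `false` (down step) when passed going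
up. -/
def toPath : OTree → List Bool
  | .node ts => (ts.attach.map (fun c => true :: (toPath c.1 ++ [false]))).flatten
  decreasing_by
    simp_wf
    have := List.sizeOf_lt_of_mem c.2
    simp at this ⊢
    omega


end OTree

/-!
The preorder word of `node (c :: ts)` is `U (toPath c) D` followed by the word of `node ts`, so
every statement is proved by induction along this decomposition. Balanced words do not interact
under concatenation: a matched pair never straddles a balanced prefix, and heights start afresh
after one, so both path statistics are additive. Wrapping a word `x` as `U x D` raises all
heights by one and adds exactly one matched pair, the outer one, which is exterior unless `x` is a
pyramid; and the word of a tree is a pyramid exactly when the tree has a single leaf.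
-/

open Finset

section Counting

theorem card_filter_range_add_of_iff {P Q R : ℕ → Prop} [DecidablePred P] [DecidablePred Q]
    [DecidablePred R] {m n : ℕ} (hQ : ∀ i < m, P i ↔ Q i)
    (hR : ∀ k < n, P (m + k) ↔ R k) :
    #{i ∈ range (m + n) | P i} = #{i ∈ range m | Q i} + #{k ∈ range n | R k} := by
  simp only [card_filter, sum_range_add]
  congr 1 <;> refine sum_congr rfl fun i hi => if_congr ?_ rfl rfl
  exacts [hQ i (mem_range.1 hi), hR i (mem_range.1 hi)]

theorem card_filter_range_add_two_of_iff {P Q : ℕ → Prop} [DecidablePred P] [DecidablePred Q]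
    {n : ℕ} (hQ : ∀ k < n, P (k + 1) ↔ Q k) (hlast : ¬ P (n + 1)) :
    #{i ∈ range (n + 2) | P i} = (if P 0 then 1 else 0) + #{k ∈ range n | Q k} := by
  simp only [card_filter, sum_range_succ, sum_range_succ' _ n, if_neg hlast, add_zero]
  rw [add_comm]
  exact congrArg _ (sum_congr rfl fun k hk => if_congr (hQ k (mem_range.1 hk)) rfl rfl)

end Counting

namespace List

variable {a b l : List Bool}

theorem take_add_one_of_getD_eq {n : ℕ} {d c : Bool} (hn : n < l.length) (h : l.getD n d = c) :
    l.take (n + 1) = l.take n ++ [c] := by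
  rw [take_add_one, getElem?_eq_getElem hn, ← h, getD_eq_getElem _ _ hn]
  rfl

theorem getD_drop {n m : ℕ} {d : Bool} : (l.drop n).getD m d = l.getD (n + m) d := by
  simp only [getD_eq_getElem?_getD, getElem?_drop]

theorem take_drop_append_of_le {n m : ℕ} (h : n + m ≤ a.length) :
    ((a ++ b).drop n).take m = (a.drop n).take m := by
  rw [drop_append_of_le_length (by omega), take_append_of_le_length (by rw [length_drop]; omega)]

end List

structure IsBalanced (p : List Bool) : Prop where
  count_eq : p.count true = p.count false
  count_take_le : ∀ k, (p.take k).count false ≤ (p.take k).count true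

namespace IsBalanced

variable {a b x : List Bool}

theorem nil : IsBalanced [] := ⟨rfl, fun k => by simp⟩

theorem append (ha : IsBalanced a) (hb : IsBalanced b) : IsBalanced (a ++ b) where
  count_eq := by simp only [List.count_append, ha.count_eq, hb.count_eq]
  count_take_le k := by
    rw [List.take_append, List.count_append, List.count_append]
    rcases le_or_gt k a.length with h | h
    · simpa [Nat.sub_eq_zero_of_le h] using ha.count_take_le k
    · rw [List.take_of_length_le h.le]
      have := hb.count_take_le (k - a.length)
      have := ha.count_eq
      omega

theorem wrap (hx : IsBalanced x) : IsBalanced (true :: (x ++ [false])) where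
  count_eq := by simp [hx.count_eq]
  count_take_le
    | 0 => by simp
    | k + 1 => by
      have hle := hx.count_take_le k
      have hlast : ([false].take (k - x.length)).count false ≤ 1 :=
        List.count_le_length.trans (by simp)
      rw [List.take_succ_cons, List.take_append]
      simp only [List.count_cons, List.count_append, beq_true, beq_false, Bool.not_true,
        Bool.false_eq_true, reduceIte]
      omega

theorem isDyckPath {p : List Bool} {n : ℕ} (hp : IsBalanced p) (hn : p.count true = n) :
    IsDyckPath n p := by
  refine ⟨?_, hn, hp.count_take_le⟩
  have := List.count_true_add_count_false p
  have := hp.count_eq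
  omega

end IsBalanced

section UpSteps

variable {a b p x : List Bool}

theorem stepHeight_append_left {i : ℕ} (hi : i < a.length) :
    stepHeight (a ++ b) i = stepHeight a i := by
  rw [stepHeight, stepHeight, List.take_append_of_le_length hi]

theorem stepHeight_append_right (ha : a.count true = a.count false) (k : ℕ) :
    stepHeight (a ++ b) (a.length + k) = stepHeight b k := by
  rw [stepHeight, stepHeight, Nat.add_assoc, List.take_append,
    List.take_of_length_le (Nat.le_add_right _ _), Nat.add_sub_cancel_left, List.count_append,
    List.count_append, ha]
  omega

theorem stepHeight_cons_true {k : ℕ}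
    (hp : (p.take (k + 1)).count false ≤ (p.take (k + 1)).count true) :
    stepHeight (true :: p) (k + 1) = stepHeight p k + 1 := by
  simp only [stepHeight, List.take_succ_cons, List.count_cons, beq_true, beq_false,
    Bool.not_true, Bool.false_eq_true, reduceIte]
  omega

theorem one_le_stepHeight (hp : ∀ k, (p.take k).count false ≤ (p.take k).count true) {i : ℕ}
    (hi : i < p.length) (hup : p.getD i false = true) : 1 ≤ stepHeight p i := by
  have := hp i
  simp only [stepHeight, List.take_add_one_of_getD_eq hi hup, List.count_append,
    List.count_singleton, beq_true, beq_false, Bool.not_true, Bool.false_eq_true, reduceIte]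
  omega

theorem upStepsAtHeight_zero (hp : ∀ k, (p.take k).count false ≤ (p.take k).count true) :
    upStepsAtHeight 0 p = 0 :=
  card_eq_zero.2 <| filter_eq_empty_iff.2 fun _ hi ⟨hup, h0⟩ =>
    Nat.one_le_iff_ne_zero.1 (one_le_stepHeight hp (mem_range.1 hi) hup) h0

theorem upStepsAtHeight_append (ha : a.count true = a.count false) (h : ℕ) :
    upStepsAtHeight h (a ++ b) = upStepsAtHeight h a + upStepsAtHeight h b := by
  rw [upStepsAtHeight, List.length_append]
  refine card_filter_range_add_of_iff (fun i hi => ?_) (fun k _ => ?_)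
  · rw [List.getD_append _ _ _ _ hi, stepHeight_append_left hi]
  · rw [List.getD_append_right _ _ _ _ (Nat.le_add_right _ _), Nat.add_sub_cancel_left,
      stepHeight_append_right ha]

theorem upStepsAtHeight_wrap (hx : IsBalanced x) (h : ℕ) :
    upStepsAtHeight (h + 1) (true :: (x ++ [false])) =
      (if h = 0 then 1 else 0) + upStepsAtHeight h x := by
  rw [upStepsAtHeight, show (true :: (x ++ [false])).length = x.length + 2 by simp,
    card_filter_range_add_two_of_iff (Q := fun k => x.getD k false = true ∧ stepHeight x k = h) ?_
      (by simp)]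
  · congr 1
    simp [stepHeight]
  · intro k hk
    have hpre : ((x ++ [false]).take (k + 1)).count false ≤
        ((x ++ [false]).take (k + 1)).count true := by
      rw [List.take_append_of_le_length hk]
      exact hx.count_take_le (k + 1)
    rw [List.getD_cons_succ, List.getD_append _ _ _ _ hk, stepHeight_cons_true hpre,
      stepHeight_append_left hk, Nat.add_right_cancel_iff]

end UpSteps

section MatchedPairs

variable {a b p x : List Bool} {i j : ℕ}

theorem isBalanced_take_iff {l : List Bool} {n : ℕ} :
    IsBalanced (l.take n) ↔ (l.take n).count true = (l.take n).count false ∧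
      ∀ k < n, ((l.take n).take k).count false ≤ ((l.take n).take k).count true := by
  refine ⟨fun h => ⟨h.count_eq, fun k _ => h.count_take_le k⟩,
    fun ⟨heq, hle⟩ => ⟨heq, fun k => ?_⟩⟩
  by_cases hk : k < n
  · exact hle k hk
  · rw [List.take_of_length_le ((List.length_take_le n l).trans (not_lt.1 hk)), heq]

theorem Matched.isBalanced (h : Matched p i j) :
    IsBalanced ((p.drop (i + 1)).take (j - i - 1)) :=
  isBalanced_take_iff.2 h.2.2.2.2

theorem Matched.not_lt {j' : ℕ} (h : Matched p i j) (h' : Matched p i j') : ¬ j < j' := by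
  -- the word enclosed by `(i, j')` would begin with the word enclosed by `(i, j)` followed by `D`
  intro hlt
  have hij := h.1
  have hj := h.2.1
  have hclose : (p.drop (i + 1)).take (j - i) =
      (p.drop (i + 1)).take (j - i - 1) ++ [false] := by
    rw [show j - i = j - i - 1 + 1 by omega]
    refine List.take_add_one_of_getD_eq (d := true) (by rw [List.length_drop]; omega) ?_
    rw [List.getD_drop, show i + 1 + (j - i - 1) = j by omega]
    exact h.2.2.2.1
  have hle := h'.isBalanced.count_take_le (j - i)
  rw [List.take_take, min_eq_left (by omega), hclose, List.count_append, List.count_append,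
    h.isBalanced.count_eq] at hle
  simp at hle

theorem Matched.right_unique {j' : ℕ} (h : Matched p i j) (h' : Matched p i j') : j = j' :=
  le_antisymm (le_of_not_gt (h'.not_lt h)) (le_of_not_gt (h.not_lt h'))

theorem Matched.lt_length_of_isBalanced (ha : IsBalanced a) (h : Matched (a ++ b) i j)
    (hi : i < a.length) : j < a.length := by
  -- the part of `a` after its up step `i` has more `D`s than `U`s, yet it would be a prefix of
  -- the balanced word enclosed by the pair
  by_contra hj
  have hrest := h.isBalanced.count_take_le (a.length - (i + 1))
  rw [List.take_take, min_eq_left (by omega), List.take_drop_append_of_le (by omega),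
    List.take_of_length_le (by simp)] at hrest
  have hup : a.getD i false = true := by rw [← List.getD_append _ b _ _ hi]; exact h.2.2.1
  have hsplit := List.take_append_drop (i + 1) a
  rw [List.take_add_one_of_getD_eq hi hup] at hsplit
  have ht := congrArg (List.count true) hsplit
  have hf := congrArg (List.count false) hsplit
  simp only [List.count_append, List.count_singleton, beq_true, beq_false, Bool.not_true,
    Bool.false_eq_true, reduceIte] at ht hf
  have := ha.count_take_le i
  have := ha.count_eq
  omega

theorem matched_append_left_iff (hj : j < a.length) : Matched (a ++ b) i j ↔ Matched a i j := by
  by_cases hij : i < j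
  · have hslice : i + 1 + (j - i - 1) ≤ a.length := by omega
    simp only [Matched, List.take_drop_append_of_le hslice, List.getD_append _ _ _ _ (hij.trans hj),
      List.getD_append _ _ _ _ hj, List.length_append, hij, hj, Nat.lt_add_right _ hj, true_and]
  · exact iff_of_false (fun h => hij h.1) (fun h => hij h.1)

theorem matched_append_right_iff :
    Matched (a ++ b) (a.length + i) (a.length + j) ↔ Matched b i j := by
  simp only [Matched, Nat.add_assoc, List.drop_length_add_append, List.length_append,
    List.getD_append_right _ _ _ _ (Nat.le_add_right _ _), Nat.add_sub_cancel_left,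
    Nat.add_lt_add_iff_left, Nat.add_sub_add_left]

theorem matched_wrap (hx : IsBalanced x) :
    Matched (true :: (x ++ [false])) 0 (x.length + 1) := by
  refine ⟨x.length.succ_pos, by simp, rfl, by simp, isBalanced_take_iff.1 ?_⟩
  simpa using hx

end MatchedPairs

section Pyramids

def IsPyramid (p : List Bool) : Prop :=
  ∃ s, p = List.replicate s true ++ List.replicate s false

variable {a b p x : List Bool} {i j : ℕ}

theorem isPyramid_wrap_iff : IsPyramid (true :: (x ++ [false])) ↔ IsPyramid x := by
  constructor
  · rintro ⟨_ | s, hs⟩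
    · simp at hs
    · rw [List.replicate_succ, List.replicate_succ', List.cons_append, ← List.append_assoc] at hs
      exact ⟨s, List.append_cancel_right (List.cons.inj hs).2⟩
  · rintro ⟨s, rfl⟩
    exact ⟨s + 1, by rw [List.replicate_succ, List.replicate_succ']; simp⟩

theorem IsPyramid.count_false_take_lt {k : ℕ} (hp : IsPyramid p) (hk0 : 0 < k)
    (hk : k < p.length) : (p.take k).count false < (p.take k).count true := by
  obtain ⟨s, rfl⟩ := hp
  simp only [List.length_append, List.length_replicate] at hk
  simp only [List.take_append, List.take_replicate, List.length_replicate, List.count_append,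
    List.count_replicate, beq_true, beq_false, Bool.not_true, Bool.not_false, Bool.false_eq_true,
    reduceIte]
  omega

theorem not_isPyramid_wrap_append (hx : IsBalanced x) (hb : b ≠ []) :
    ¬ IsPyramid (true :: (x ++ [false]) ++ b) := fun hp => by
  have hlen : x.length + 2 < (true :: (x ++ [false]) ++ b).length := by
    have := List.length_pos_iff.2 hb
    simp only [List.cons_append, List.length_cons, List.length_append]
    omega
  have hlt := hp.count_false_take_lt (by omega) hlen
  rw [List.take_left' (by simp), hx.wrap.count_eq] at hlt
  exact hlt.false

theorem isPyramidSec_iff :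
    IsPyramidSec p i j ↔
      i ≤ j ∧ j < p.length ∧ IsPyramid ((p.drop i).take (j - i + 1)) := by
  refine ⟨fun ⟨hij, hj, _, hsec⟩ => ⟨hij, hj, _, hsec⟩, fun ⟨hij, hj, s, hs⟩ => ?_⟩
  have hlen := congrArg List.length hs
  simp only [List.length_take, List.length_drop, List.length_append, List.length_replicate] at hlen
  have hs2 : (j - i + 1) / 2 = s := by omega
  exact ⟨hij, hj, by omega, hs2 ▸ hs⟩

theorem isPyramidSec_append_left_iff (hj : j < a.length) :
    IsPyramidSec (a ++ b) i j ↔ IsPyramidSec a i j := by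
  by_cases hij : i ≤ j
  · simp only [isPyramidSec_iff, List.length_append, hij, hj, Nat.lt_add_right _ hj, true_and,
      List.take_drop_append_of_le (show i + (j - i + 1) ≤ a.length by omega)]
  · exact iff_of_false (fun h => hij h.1) (fun h => hij h.1)

theorem isPyramidSec_append_right_iff :
    IsPyramidSec (a ++ b) (a.length + i) (a.length + j) ↔ IsPyramidSec b i j := by
  simp only [isPyramidSec_iff, List.drop_length_add_append, List.length_append,
    Nat.add_lt_add_iff_left, Nat.add_sub_add_left, Nat.add_le_add_iff_left]

theorem isPyramidSec_wrap_iff :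
    IsPyramidSec (true :: (x ++ [false])) 0 (x.length + 1) ↔ IsPyramid x := by
  rw [isPyramidSec_iff, ← isPyramid_wrap_iff (x := x), List.drop_zero,
    List.take_of_length_le (by simp)]
  simp

end Pyramids

section ExteriorPairs

variable {a b x : List Bool} {i j k : ℕ}

theorem exteriorPair_append_left_iff (hj : j < a.length) :
    ExteriorPair (a ++ b) i j ↔ ExteriorPair a i j :=
  and_congr (matched_append_left_iff hj) (not_congr (isPyramidSec_append_left_iff hj))

theorem exteriorPair_append_right_iff :
    ExteriorPair (a ++ b) (a.length + i) (a.length + j) ↔ ExteriorPair b i j :=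
  and_congr matched_append_right_iff (not_congr isPyramidSec_append_right_iff)

theorem exists_exteriorPair_append_left_iff (ha : IsBalanced a) (hi : i < a.length) :
    (∃ j, ExteriorPair (a ++ b) i j) ↔ ∃ j, ExteriorPair a i j := by
  constructor
  · rintro ⟨j, hj⟩
    exact ⟨j, (exteriorPair_append_left_iff (hj.1.lt_length_of_isBalanced ha hi)).1 hj⟩
  · rintro ⟨j, hj⟩
    exact ⟨j, (exteriorPair_append_left_iff hj.1.2.1).2 hj⟩

theorem exists_exteriorPair_append_right_iff :
    (∃ j, ExteriorPair (a ++ b) (a.length + k) j) ↔ ∃ j, ExteriorPair b k j := by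
  constructor
  · rintro ⟨j, hj⟩
    obtain ⟨j, rfl⟩ := Nat.exists_eq_add_of_le (show a.length ≤ j by have := hj.1.1; omega)
    exact ⟨j, exteriorPair_append_right_iff.1 hj⟩
  · rintro ⟨j, hj⟩
    exact ⟨a.length + j, exteriorPair_append_right_iff.2 hj⟩

theorem exists_exteriorPair_wrap_zero_iff (hx : IsBalanced x) :
    (∃ j, ExteriorPair (true :: (x ++ [false])) 0 j) ↔ ¬ IsPyramid x := by
  rw [← isPyramidSec_wrap_iff]
  constructor
  · rintro ⟨j, hm, hpyr⟩
    rwa [hm.right_unique (matched_wrap hx)] at hpyr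
  · exact fun hpyr => ⟨_, matched_wrap hx, hpyr⟩

theorem exists_exteriorPair_wrap_succ_iff (hx : IsBalanced x) (hk : k < x.length) :
    (∃ j, ExteriorPair (true :: (x ++ [false])) (k + 1) j) ↔ ∃ j, ExteriorPair x k j := by
  rw [Nat.add_comm]
  exact (exists_exteriorPair_append_right_iff (a := [true])).trans
    (exists_exteriorPair_append_left_iff hx hk)

open scoped Classical in
theorem exteriorPairs_eq_card_filter (p : List Bool) :
    exteriorPairs p = #{i ∈ range p.length | ∃ j, ExteriorPair p i j} := by
  rw [exteriorPairs, ← card_image_of_injOn (f := Prod.fst)]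
  · congr 1
    ext i
    simp only [mem_image, mem_filter, mem_product, mem_range, Prod.exists, exists_and_right,
      exists_eq_right]
    exact ⟨fun ⟨_, ⟨hi, _⟩, hj⟩ => ⟨hi, _, hj⟩,
      fun ⟨hi, j, hj⟩ => ⟨j, ⟨hi, hj.1.2.1⟩, hj⟩⟩
  · rintro ⟨i, j⟩ hq ⟨i', j'⟩ hq' (rfl : i = i')
    simp only [coe_filter, Set.mem_ofPred_eq] at hq hq'
    exact Prod.ext rfl (hq.2.1.right_unique hq'.2.1)

theorem exteriorPairs_append (ha : IsBalanced a) :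
    exteriorPairs (a ++ b) = exteriorPairs a + exteriorPairs b := by
  classical
  simp only [exteriorPairs_eq_card_filter, List.length_append]
  exact card_filter_range_add_of_iff (fun i hi => exists_exteriorPair_append_left_iff ha hi)
    (fun k _ => exists_exteriorPair_append_right_iff)

open scoped Classical in
theorem exteriorPairs_wrap (hx : IsBalanced x) :
    exteriorPairs (true :: (x ++ [false])) = (if IsPyramid x then 0 else 1) + exteriorPairs x := by
  rw [exteriorPairs_eq_card_filter, exteriorPairs_eq_card_filter,
    show (true :: (x ++ [false])).length = x.length + 2 by simp,
    card_filter_range_add_two_of_iff (fun k hk => exists_exteriorPair_wrap_succ_iff hx hk),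
    if_congr (exists_exteriorPair_wrap_zero_iff hx) rfl rfl, ite_not]
  rintro ⟨j, hm, -⟩
  simpa using hm.2.2.1

end ExteriorPairs

namespace OTree

@[elab_as_elim]
theorem cons_induction {motive : OTree → Prop} (nil : motive (node []))
    (cons : ∀ c ts, motive c → motive (node ts) → motive (node (c :: ts))) : ∀ t, motive t
  | node [] => nil
  | node (c :: ts) => cons c ts (cons_induction nil cons c) (cons_induction nil cons (node ts))

theorem toPath_nil : (node []).toPath = [] := by
  simp [toPath]

theorem toPath_cons (c : OTree) (ts : List OTree) :
    (node (c :: ts)).toPath = true :: (c.toPath ++ [false]) ++ (node ts).toPath := by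
  simp [toPath]

theorem numEdges_nil : (node []).numEdges = 0 := by
  simp [numEdges]

theorem numEdges_cons (c : OTree) (ts : List OTree) :
    (node (c :: ts)).numEdges = c.numEdges + 1 + (node ts).numEdges := by
  simp [numEdges]

theorem numLeaves_singleton (c : OTree) : (node [c]).numLeaves = c.numLeaves := by
  simp [numLeaves]

theorem numLeaves_cons_cons (c d : OTree) (ts : List OTree) :
    (node (c :: d :: ts)).numLeaves = c.numLeaves + (node (d :: ts)).numLeaves := by
  simp [numLeaves]

theorem extEdges_node (ts : List OTree) :
    (node ts).extEdges =
      (ts.map fun c => (if 2 ≤ c.numLeaves then 1 else 0) + c.extEdges).sum := by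
  rw [extEdges,
    List.attach_map_val (f := fun c : OTree => (if 2 ≤ c.numLeaves then 1 else 0) + c.extEdges)]

theorem extEdges_cons (c : OTree) (ts : List OTree) :
    (node (c :: ts)).extEdges =
      (if 2 ≤ c.numLeaves then 1 else 0) + c.extEdges + (node ts).extEdges := by
  simp [extEdges_node, Nat.add_assoc]

theorem edgesAtLevelFrom_nil (cur h : ℕ) : (node []).edgesAtLevelFrom cur h = 0 := by
  simp [edgesAtLevelFrom]

theorem edgesAtLevelFrom_cons (c : OTree) (ts : List OTree) (cur h : ℕ) :
    (node (c :: ts)).edgesAtLevelFrom cur h =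
      (if cur + 1 = h then 1 else 0) + c.edgesAtLevelFrom (cur + 1) h +
        (node ts).edgesAtLevelFrom cur h := by
  rw [edgesAtLevelFrom, edgesAtLevelFrom]
  simp [Nat.add_assoc]

theorem edgesAtLevelFrom_succ_succ (t : OTree) (cur h : ℕ) :
    t.edgesAtLevelFrom (cur + 1) (h + 1) = t.edgesAtLevelFrom cur h := by
  induction t using cons_induction generalizing cur with
  | nil => simp [edgesAtLevelFrom_nil]
  | cons c ts ihc ihts => simp [edgesAtLevelFrom_cons, ihc, ihts]

theorem edgesAtLevelFrom_eq_zero_of_le (t : OTree) {cur h : ℕ} (hh : h ≤ cur) :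
    t.edgesAtLevelFrom cur h = 0 := by
  induction t using cons_induction generalizing cur with
  | nil => simp [edgesAtLevelFrom_nil]
  | cons c ts ihc ihts =>
    rw [edgesAtLevelFrom_cons, ihc (by omega), ihts hh, if_neg (by omega)]

theorem edgesAtLevel_zero (t : OTree) : t.edgesAtLevel 0 = 0 :=
  t.edgesAtLevelFrom_eq_zero_of_le le_rfl

theorem edgesAtLevel_cons_succ (c : OTree) (ts : List OTree) (h : ℕ) :
    (node (c :: ts)).edgesAtLevel (h + 1) =
      (if h = 0 then 1 else 0) + c.edgesAtLevel h + (node ts).edgesAtLevel (h + 1) := by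
  simp [edgesAtLevel, edgesAtLevelFrom_cons, edgesAtLevelFrom_succ_succ]

theorem one_le_numLeaves (t : OTree) : 1 ≤ t.numLeaves := by
  induction t using cons_induction with
  | nil => simp [numLeaves]
  | cons c ts ihc ihts =>
    cases ts with
    | nil => rwa [numLeaves_singleton]
    | cons d ts => rw [numLeaves_cons_cons]; omega

theorem count_true_toPath (t : OTree) : t.toPath.count true = t.numEdges := by
  induction t using cons_induction with
  | nil => simp [toPath_nil, numEdges_nil]
  | cons c ts ihc ihts =>
    simp only [toPath_cons, numEdges_cons, List.count_append, List.count_cons_self, ihc, ihts,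
      List.count_singleton, beq_true, Bool.false_eq_true, reduceIte]

theorem isBalanced_toPath (t : OTree) : IsBalanced t.toPath := by
  induction t using cons_induction with
  | nil => exact toPath_nil ▸ .nil
  | cons c ts ihc ihts => exact toPath_cons c ts ▸ ihc.wrap.append ihts

theorem upStepsAtHeight_toPath (t : OTree) (h : ℕ) :
    upStepsAtHeight h t.toPath = t.edgesAtLevel h := by
  induction t using cons_induction generalizing h with
  | nil => simp [toPath_nil, upStepsAtHeight, edgesAtLevel, edgesAtLevelFrom_nil]
  | cons c ts ihc ihts =>
    rcases h with _ | h
    · rw [upStepsAtHeight_zero (isBalanced_toPath _).count_take_le, edgesAtLevel_zero]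
    · rw [toPath_cons, upStepsAtHeight_append c.isBalanced_toPath.wrap.count_eq,
        upStepsAtHeight_wrap c.isBalanced_toPath, ihc, ihts, edgesAtLevel_cons_succ]

theorem numLeaves_eq_one_iff (t : OTree) : t.numLeaves = 1 ↔ IsPyramid t.toPath := by
  induction t using cons_induction with
  | nil => exact iff_of_true (by simp [numLeaves]) ⟨0, toPath_nil⟩
  | cons c ts ihc _ =>
    cases ts with
    | nil =>
      rw [numLeaves_singleton, ihc, toPath_cons, toPath_nil, List.append_nil, isPyramid_wrap_iff]
    | cons d ts =>
      have := c.one_le_numLeaves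
      have := (node (d :: ts)).one_le_numLeaves
      refine iff_of_false (by rw [numLeaves_cons_cons]; omega) ?_
      rw [toPath_cons]
      exact not_isPyramid_wrap_append c.isBalanced_toPath (by simp [toPath_cons])

theorem exteriorPairs_toPath (t : OTree) : exteriorPairs t.toPath = t.extEdges := by
  induction t using cons_induction with
  | nil => simp [toPath_nil, exteriorPairs, extEdges_node]
  | cons c ts ihc ihts =>
    rw [toPath_cons, exteriorPairs_append c.isBalanced_toPath.wrap,
      exteriorPairs_wrap c.isBalanced_toPath, ihc, ihts, extEdges_cons, ← numLeaves_eq_one_iff]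
    have := c.one_le_numLeaves
    congr 2
    split_ifs <;> omega

end OTree

/-- Under the preorder bijection `OTree.toPath` between ordered trees with `n` edges
and Dyck paths of semilength `n`, the number of up steps at height `h` of the path
equals the number of edges at level `h` of the tree, and the number of exterior pairs
of the path equals the number of exterior edges of the tree. -/
theorem preorder_bijection_statistics (t : OTree) :
    IsDyckPath t.numEdges t.toPath ∧
    (∀ h : ℕ, upStepsAtHeight h t.toPath = t.edgesAtLevel h) ∧
    exteriorPairs t.toPath = t.extEdges :=
  ⟨t.isBalanced_toPath.isDyckPath t.count_true_toPath, t.upStepsAtHeight_toPath,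
    t.exteriorPairs_toPath⟩
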